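/- In the polynomial ring Z[X₁, X₂], for every N ≥ 2 the element (X₁X₂)^{N-1} lies in the ideal generated by the complete homogeneous symmetric polynomials h_{N-1}(X₁,X₂) = Σ_{i+j=N-1} X₁^i X₂^j and h_N(X₁,X₂) = Σ_{i+j=N} X₁^i X₂^j. -/
import Mathlib


open MvPolynomial Finset

/-- The complete homogeneous symmetric polynomial of degree `k` in two variables:
`h_k(X₁, X₂) = Σ_{i+j=k} X₁^i X₂^j`. -/
noncomputable def hSymm (k : ℕ) : MvPolynomial (Fin 2) ℤ :=
  ∑ i ∈ Finset.range (k + 1), X 0 ^ i * X 1 ^ (k - i)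

lemma hSymm_succ_left (k : ℕ) :
    hSymm (k + 1) = X 0 * hSymm k + X 1 ^ (k + 1) := by
  unfold hSymm
  rw [Finset.sum_range_succ', Finset.mul_sum]
  simp only [Nat.succ_sub_succ, pow_zero, one_mul, Nat.sub_zero]
  congr 1
  refine Finset.sum_congr rfl fun i _ => ?_
  ring

lemma hSymm_succ_right (k : ℕ) :
    hSymm (k + 1) = X 1 * hSymm k + X 0 ^ (k + 1) := by
  unfold hSymm
  rw [Finset.sum_range_succ, Finset.mul_sum]
  simp only [Nat.sub_self, pow_zero, mul_one]
  congr 1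
  refine Finset.sum_congr rfl fun i hi => ?_
  have hi' : i ≤ k := Nat.lt_succ_iff.mp (Finset.mem_range.mp hi)
  rw [Nat.succ_sub hi', pow_succ]
  ring

theorem stmt_10 (N : ℕ) (hN : 2 ≤ N) :
    ((X 0 * X 1 : MvPolynomial (Fin 2) ℤ) ^ (N - 1)) ∈
      Ideal.span {hSymm (N - 1), hSymm N} := by
  obtain ⟨M, rfl⟩ : ∃ M, N = M + 2 := ⟨N - 2, by omega⟩
  have h1 : M + 2 - 1 = M + 1 := rfl
  rw [h1, Ideal.mem_span_pair]
  refine ⟨X 0 ^ (M + 1) + X 1 * hSymm M, -(hSymm M), ?_⟩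
  rw [hSymm_succ_left M, hSymm_succ_right (M + 1), hSymm_succ_left M]
  ring
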